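/- arXiv:2501.07351 — 2 statements merged into one kernel-verified Lean document; each statement's English description precedes it below -/
import Mathlib

section
/- Define the map M_0(ρ) = (1/d!) ∑_{π∈S_d} ∑_{m=0}^{d-1} (|m⟩⟨\widetilde{π(m)}| ⊗ 𝟙) ρ (|\widetilde{π(m)}⟩⟨m| ⊗ 𝟙), where |k̃⟩ = (1/√d) ∑_l ω^{-kl}|l⟩. Then for every operator ρ on ℂ^d ⊗ H, M_0(ρ) = (1/d) ∑_{m,k=0}^{d-1} (|m⟩⟨k| ⊗ 𝟙) ρ (|k⟩⟨m| ⊗ 𝟙). -/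
open Complex

variable {ι : Type*}

/-- The standard basis vector `|k⟩` of `ℂ^d`. -/
def ket (d : ℕ) (k : Fin d) : Fin d → ℂ := fun l => if l = k then 1 else 0

/-- The Fourier basis vector `|k̃⟩ = (1/√d) ∑_l ω^{-kl} |l⟩`. -/
noncomputable def ketTilde (d : ℕ) (ω : ℂ) (k : Fin d) : Fin d → ℂ :=
  fun l => ω ^ (-((k : ℤ) * (l : ℤ))) / Real.sqrt d

/-- The operator `|u⟩⟨v| ⊗ 𝟙` on `ℂ^d ⊗ H`, `H` having orthonormal basis indexed by `ι`. -/
def ketBraTensorId (d : ℕ) (ι : Type*) [Fintype ι] [DecidableEq ι]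
    (u v : Fin d → ℂ) : Matrix (Fin d × ι) (Fin d × ι) ℂ :=
  Matrix.of fun p q => u p.1 * (starRingEnd ℂ) (v q.1) * (if p.2 = q.2 then 1 else 0)

lemma sandwich_apply (d : ℕ) (ι : Type*) [Fintype ι] [DecidableEq ι]
    (u v w x : Fin d → ℂ) (ρ : Matrix (Fin d × ι) (Fin d × ι) ℂ) (p q : Fin d × ι) :
    (ketBraTensorId d ι u v * ρ * ketBraTensorId d ι w x) p q =
      u p.1 * (starRingEnd ℂ) (x q.1) *
        ∑ r : Fin d, ∑ s : Fin d, (starRingEnd ℂ) (v r) * w s * ρ (r, p.2) (s, q.2) := by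
  simp only [Matrix.mul_apply, ketBraTensorId, Matrix.of_apply, Fintype.sum_prod_type,
    mul_ite, ite_mul, one_mul, mul_one, zero_mul, mul_zero, Finset.sum_ite_eq,
    Finset.sum_ite_eq', Finset.mem_univ, if_true, Finset.mul_sum, Finset.sum_mul]
  rw [Finset.sum_comm]
  refine Finset.sum_congr rfl fun r _ => Finset.sum_congr rfl fun s _ => by ring

lemma root_sum (d : ℕ) (hd : 2 ≤ d) (ω : ℂ)
    (hω : ω = Complex.exp (2 * Real.pi * Complex.I / d)) (r s : Fin d) :
    ∑ j : Fin d, ω ^ (((j : ℤ)) * ((r : ℤ) - (s : ℤ))) = if r = s then (d : ℂ) else 0 := by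
  have hd0 : (d : ℕ) ≠ 0 := by omega
  have hprim : IsPrimitiveRoot ω d := hω ▸ Complex.isPrimitiveRoot_exp d hd0
  have hω0 : ω ≠ 0 := hprim.ne_zero hd0
  set x : ℂ := ω ^ ((r : ℤ) - (s : ℤ)) with hx
  have hpow : ∀ j : Fin d, ω ^ (((j : ℤ)) * ((r : ℤ) - (s : ℤ))) = x ^ (j : ℕ) := by
    intro j
    rw [hx, ← zpow_natCast (ω ^ ((r:ℤ) - (s:ℤ))), ← zpow_mul, mul_comm]
  simp only [hpow]
  rw [Fin.sum_univ_eq_sum_range (fun j => x ^ j) d]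
  by_cases h : r = s
  · subst h
    simp [hx]
  · rw [if_neg h]
    have hx1 : x ≠ 1 := by
      intro hc
      rw [hx, hprim.zpow_eq_one_iff_dvd] at hc
      have := Int.eq_zero_of_abs_lt_dvd hc (by
        have h1 : (r : ℤ) < d := by exact_mod_cast r.2
        have h2 : (s : ℤ) < d := by exact_mod_cast s.2
        have h3 : 0 ≤ (r : ℤ) := Int.ofNat_nonneg _
        have h4 : 0 ≤ (s : ℤ) := Int.ofNat_nonneg _
        rw [abs_lt]; omega)
      exact h (Fin.ext (by omega))
    have hxd : x ^ d = 1 := by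
      rw [hx, ← zpow_natCast, ← zpow_mul, mul_comm ((r:ℤ)-(s:ℤ)) ((d:ℕ):ℤ), zpow_mul,
        zpow_natCast, hprim.pow_eq_one, one_zpow]
    rw [geom_sum_eq hx1, hxd, sub_self, zero_div]
    

lemma perm_sum_indep {d : ℕ} (a b : Fin d) (F : Fin d → ℂ) :
    ∑ π : Equiv.Perm (Fin d), F (π a) = ∑ π : Equiv.Perm (Fin d), F (π b) := by
  rw [← Equiv.sum_comp (Equiv.mulRight (Equiv.swap a b)) (fun π => F (π b))]
  refine Finset.sum_congr rfl fun π _ => ?_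
  simp [Equiv.Perm.mul_apply]

lemma perm_sum_eval {d : ℕ} (a : Fin d) (F : Fin d → ℂ) :
    (d : ℂ) * ∑ π : Equiv.Perm (Fin d), F (π a) = (d.factorial : ℂ) * ∑ j, F j := by
  have h1 : (d : ℂ) * ∑ π : Equiv.Perm (Fin d), F (π a)
      = ∑ b : Fin d, ∑ π : Equiv.Perm (Fin d), F (π b) := by
    rw [Finset.sum_congr rfl fun b _ => (perm_sum_indep b a F)]
    simp [Finset.sum_const, nsmul_eq_mul, Finset.card_univ]
  rw [h1, Finset.sum_comm]
  have : ∀ π : Equiv.Perm (Fin d), ∑ b : Fin d, F (π b) = ∑ j, F j := fun π =>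
    Equiv.sum_comp π F
  simp [this, Finset.sum_const, nsmul_eq_mul, Finset.card_univ, Fintype.card_perm]

lemma final_alg {d : ℕ} (T : Fin d → ℂ) (a : Fin d) (S : ℂ) (hT : ∑ j, T j = S)
    (hdC : (d : ℂ) ≠ 0) (hfC : ((d.factorial : ℕ) : ℂ) ≠ 0) :
    1 / (d.factorial : ℂ) * ∑ π : Equiv.Perm (Fin d), T (π a) = 1 / (d : ℂ) * S := by
  have h := perm_sum_eval a T
  rw [hT] at h
  field_simp
  linear_combination h

theorem M0_eq_depolarized (d : ℕ) (hd : 2 ≤ d)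
    (ω : ℂ) (hω : ω = Complex.exp (2 * Real.pi * Complex.I / d))
    (ι : Type*) [Fintype ι] [DecidableEq ι]
    (ρ : Matrix (Fin d × ι) (Fin d × ι) ℂ) :
    ((1 : ℂ) / (Nat.factorial d)) •
        ∑ π : Equiv.Perm (Fin d), ∑ m : Fin d,
          ketBraTensorId d ι (ket d m) (ketTilde d ω (π m)) * ρ *
            ketBraTensorId d ι (ketTilde d ω (π m)) (ket d m) =
      ((1 : ℂ) / d) •
        ∑ m : Fin d, ∑ k : Fin d,
          ketBraTensorId d ι (ket d m) (ket d k) * ρ *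
            ketBraTensorId d ι (ket d k) (ket d m) := by
  have hd0 : d ≠ 0 := by omega
  have hdC : (d : ℂ) ≠ 0 := Nat.cast_ne_zero.mpr hd0
  have hfC : ((d.factorial : ℕ) : ℂ) ≠ 0 := Nat.cast_ne_zero.mpr (Nat.factorial_ne_zero d)
  have hprim : IsPrimitiveRoot ω d := hω ▸ Complex.isPrimitiveRoot_exp d hd0
  have hω0 : ω ≠ 0 := hprim.ne_zero hd0
  have hconj : (starRingEnd ℂ) ω = ω⁻¹ := by
    rw [hω, ← Complex.exp_conj, ← Complex.exp_neg]
    congr 1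
    simp only [map_div₀, map_mul, Complex.conj_I, Complex.conj_ofReal, map_ofNat,
      map_natCast]
    ring
  have hconjzpow : ∀ z : ℤ, (starRingEnd ℂ) (ω ^ z) = ω ^ (-z) := by
    intro z
    rw [map_zpow₀, hconj, inv_zpow, ← zpow_neg]
  have hsd : ((Real.sqrt d : ℝ) : ℂ) * ((Real.sqrt d : ℝ) : ℂ) = (d : ℂ) := by
    rw [← Complex.ofReal_mul, Real.mul_self_sqrt (by positivity)]
    norm_num
  have hkey : ∀ (j r s : Fin d), (starRingEnd ℂ) (ketTilde d ω j r) * ketTilde d ω j s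
      = ω ^ ((j : ℤ) * ((r : ℤ) - (s : ℤ))) / d := by
    intro j r s
    simp only [ketTilde, map_div₀, hconjzpow, Complex.conj_ofReal, neg_neg]
    rw [div_mul_div_comm, hsd, ← zpow_add₀ hω0]
    congr 2
    ring
  ext p q
  simp only [Matrix.smul_apply, Matrix.sum_apply, sandwich_apply, smul_eq_mul, hkey]
  have hketinner : ∀ k : Fin d,
      ∑ r : Fin d, ∑ s : Fin d, (starRingEnd ℂ) (ket d k r) * ket d k s * ρ (r, p.2) (s, q.2)
        = ρ (k, p.2) (k, q.2) := by
    intro k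
    simp [ket, apply_ite, ite_mul, mul_ite, Finset.sum_ite_eq', Finset.mul_sum]
  have hcollapse : ∀ (G : Fin d → ℂ),
      ∑ m : Fin d, ket d m p.1 * (starRingEnd ℂ) (ket d m q.1) * G m
        = if q.1 = p.1 then G p.1 else 0 := by
    intro G
    simp only [ket, apply_ite, map_one, map_zero, ite_mul, mul_ite, one_mul, zero_mul,
      mul_one, mul_zero]
    rw [Finset.sum_ite_eq]
    simp only [Finset.mem_univ, if_true]
    by_cases h : p.1 = q.1
    · rw [if_pos h, if_pos h.symm, h]
    · rw [if_neg h, if_neg (fun hh => h hh.symm)]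
  simp only [hketinner, ← Finset.mul_sum, hcollapse]
  by_cases hpq : q.1 = p.1
  · simp only [if_pos hpq]
    have hT : ∑ j : Fin d, ∑ r : Fin d, ∑ s : Fin d,
        ω ^ ((j : ℤ) * ((r : ℤ) - (s : ℤ))) / d * ρ (r, p.2) (s, q.2)
          = ∑ k : Fin d, ρ (k, p.2) (k, q.2) := by
      rw [Finset.sum_comm]
      refine Finset.sum_congr rfl fun r _ => ?_
      rw [Finset.sum_comm]
      have hs : ∀ s : Fin d, ∑ j : Fin d,
          ω ^ ((j : ℤ) * ((r : ℤ) - (s : ℤ))) / d * ρ (r, p.2) (s, q.2)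
            = (if r = s then (d : ℂ) else 0) / d * ρ (r, p.2) (s, q.2) := by
        intro s
        rw [← Finset.sum_mul, ← Finset.sum_div, root_sum d hd ω hω r s]
      simp only [hs]
      rw [Finset.sum_eq_single r]
      · simp [div_self hdC]
      · intro b _ hb
        rw [if_neg (fun h => hb h.symm)]
        simp
      · intro h
        exact absurd (Finset.mem_univ r) h
    exact final_alg (fun j => ∑ r : Fin d, ∑ s : Fin d,
      ω ^ ((j : ℤ) * ((r : ℤ) - (s : ℤ))) / d * ρ (r, p.2) (s, q.2)) p.1 _ hT hdC hfC
  · simp [if_neg hpq]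
end

section
/- Let A = A₁ ⊗ A₂ with dim A₂ = N₂, let {|x_i⟩}_{i<M} be unit vectors each maximally entangled across A₁⊗A₂ (i.e. |x_i⟩ = (1/√N₂) ∑_{k<N₂} |e_{ik}⟩⊗|f_{ik}⟩ with {e_{ik}}_k, {f_{ik}}_k orthonormal), let |y_i⟩ = |v_i⟩⊗|w_i⟩ be unit product vectors, let λ_i ≥ 0 with ∑λ_i = 1, and let {K_j = K_{j1}⊗K_{j2}} be product Kraus operators with ∑_j K_j†K_j = 𝟙. Then ∑_j |∑_i λ_i ⟨x_i| K_j |y_i⟩|² ≤ 1/N₂. -/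
/-!
Write `⟨x_i| K_j |y_i⟩ = (1/√N₂) ∑_k ⟨e_ik| K_j1 v_i⟩ ⟨f_ik| K_j2 w_i⟩`. Cauchy–Schwarz over the
pairs `(i, k)`, followed by Bessel's inequality for the orthonormal families `e_i` and `f_i`,
bounds the `j`-th term by `(1/N₂) (∑_i λ_i ‖K_j1 v_i‖²) (∑_i λ_i ‖K_j2 w_i‖²)`. Trace
preservation of the product channel, applied to the product vector `v_i ⊗ w_i'`, gives
`∑_j ‖K_j1 v_i‖² ‖K_j2 w_i'‖² = 1`, so summing over `j` leaves `(∑_i λ_i)² / N₂ = 1 / N₂`.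
-/

open Complex Matrix
open scoped Kronecker

section TensorVec

variable {R m n : Type*}

def tensorVec [Mul R] (v : m → R) (w : n → R) : m × n → R := fun q => v q.1 * w q.2

@[simp]
lemma tensorVec_apply [Mul R] (v : m → R) (w : n → R) (q : m × n) :
    tensorVec v w q = v q.1 * w q.2 := rfl

variable [Fintype m] [Fintype n]

lemma kronecker_mulVec_tensorVec [CommSemiring R] {m' n' : Type*} (A : Matrix m' m R)
    (B : Matrix n' n R) (v : m → R) (w : n → R) :
    (A ⊗ₖ B) *ᵥ tensorVec v w = tensorVec (A *ᵥ v) (B *ᵥ w) := by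
  ext q
  simp only [mulVec, dotProduct, tensorVec_apply, kroneckerMap_apply, Fintype.sum_prod_type,
    Finset.sum_mul_sum]
  exact Finset.sum_congr rfl fun _ _ => Finset.sum_congr rfl fun _ _ => by ring

lemma star_tensorVec_dotProduct_tensorVec [CommSemiring R] [StarRing R] (a u : m → R)
    (b w : n → R) :
    star (tensorVec a b) ⬝ᵥ tensorVec u w = (star a ⬝ᵥ u) * (star b ⬝ᵥ w) := by
  simp only [dotProduct, Pi.star_apply, tensorVec_apply, star_mul', Fintype.sum_prod_type,
    Finset.sum_mul_sum]
  exact Finset.sum_congr rfl fun _ _ => Finset.sum_congr rfl fun _ _ => by ring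

lemma star_dotProduct_tensorVec_of_eq_mul_sum {κ : Type*} [Fintype κ] [CommSemiring R]
    [StarRing R] {x : m × n → R} {c : R} {e : κ → m → R} {f : κ → n → R}
    (hx : ∀ p, x p = c * ∑ k, e k p.1 * f k p.2) (u : m → R) (w : n → R) :
    star x ⬝ᵥ tensorVec u w = star c * ∑ k, (star (e k) ⬝ᵥ u) * (star (f k) ⬝ᵥ w) := by
  have hx' : x = c • ∑ k, tensorVec (e k) (f k) := by
    ext p; simp [hx, Finset.sum_apply]
  simp only [hx', star_smul, star_sum, smul_dotProduct, sum_dotProduct,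
    star_tensorVec_dotProduct_tensorVec, smul_eq_mul]

end TensorVec

lemma sum_star_mulVec_dotProduct_mulVec {R n J : Type*} [Fintype n] [DecidableEq n] [Fintype J]
    [CommSemiring R] [StarRing R] (K : J → Matrix n n R) (hK : ∑ j, (K j)ᴴ * K j = 1)
    (u : n → R) :
    ∑ j, star (K j *ᵥ u) ⬝ᵥ (K j *ᵥ u) = star u ⬝ᵥ u := by
  simp only [star_mulVec, ← dotProduct_mulVec, mulVec_mulVec, ← dotProduct_sum, ← sum_mulVec,
    hK, one_mulVec]

lemma star_dotProduct_self_eq_sum_norm_sq {n : Type*} [Fintype n] (u : n → ℂ) :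
    star u ⬝ᵥ u = ((∑ r, ‖u r‖ ^ 2 : ℝ) : ℂ) := by
  simp [dotProduct, conj_mul']

lemma sum_norm_sq_star_dotProduct_le {n κ : Type*} [Fintype n] [Fintype κ] [DecidableEq κ]
    (g : κ → n → ℂ) (hg : ∀ k k', star (g k) ⬝ᵥ g k' = if k = k' then 1 else 0) (u : n → ℂ) :
    ∑ k, ‖star (g k) ⬝ᵥ u‖ ^ 2 ≤ ∑ r, ‖u r‖ ^ 2 := by
  have hOrth : Orthonormal ℂ fun k => WithLp.toLp 2 (g k) := by
    rw [orthonormal_iff_ite]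
    intro k k'
    rw [EuclideanSpace.inner_toLp_toLp, dotProduct_comm, hg]
  have := hOrth.sum_inner_products_le (s := Finset.univ) (WithLp.toLp 2 u)
  simpa only [EuclideanSpace.inner_toLp_toLp, dotProduct_comm u, EuclideanSpace.norm_sq_eq]
    using this

lemma norm_sq_sum_weighted_mul_le {ι : Type*} [Fintype ι] (lam : ι → ℝ) (hlam : ∀ i, 0 ≤ lam i)
    (a b : ι → ℂ) :
    ‖∑ i, (lam i : ℂ) * (a i * b i)‖ ^ 2 ≤
      (∑ i, lam i * ‖a i‖ ^ 2) * (∑ i, lam i * ‖b i‖ ^ 2) := by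
  have htri : ‖∑ i, (lam i : ℂ) * (a i * b i)‖ ≤ ∑ i, lam i * (‖a i‖ * ‖b i‖) :=
    (norm_sum_le _ _).trans_eq <| by simp [abs_of_nonneg (hlam _)]
  refine (pow_le_pow_left₀ (norm_nonneg _) htri 2).trans ?_
  refine Finset.sum_sq_le_sum_mul_sum_of_sq_le_mul _ (fun i _ => by have := hlam i; positivity)
    (fun i _ => by have := hlam i; positivity) fun i _ => le_of_eq ?_
  ring

lemma sum_kronecker_norm_sq_eq {n₁ n₂ J : Type*} [Fintype n₁] [Fintype n₂] [DecidableEq n₁]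
    [DecidableEq n₂] [Fintype J] (K₁ : J → Matrix n₁ n₁ ℂ) (K₂ : J → Matrix n₂ n₂ ℂ)
    (hK : ∑ j, (K₁ j ⊗ₖ K₂ j)ᴴ * (K₁ j ⊗ₖ K₂ j) = 1) (v : n₁ → ℂ) (w : n₂ → ℂ) :
    ∑ j, (∑ r, ‖(K₁ j *ᵥ v) r‖ ^ 2) * (∑ r, ‖(K₂ j *ᵥ w) r‖ ^ 2) =
      (∑ r, ‖v r‖ ^ 2) * (∑ r, ‖w r‖ ^ 2) := by
  have := sum_star_mulVec_dotProduct_mulVec _ hK (tensorVec v w)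
  simp only [kronecker_mulVec_tensorVec, star_tensorVec_dotProduct_tensorVec] at this
  simp only [star_dotProduct_self_eq_sum_norm_sq] at this
  exact_mod_cast this

lemma norm_sq_sum_weighted_sum_mul_le {ι κ : Type*} [Fintype ι] [Fintype κ] (lam : ι → ℝ)
    (hlam : ∀ i, 0 ≤ lam i) (a b : ι → κ → ℂ) :
    ‖∑ i, (lam i : ℂ) * ∑ k, a i k * b i k‖ ^ 2 ≤
      (∑ i, lam i * ∑ k, ‖a i k‖ ^ 2) * (∑ i, lam i * ∑ k, ‖b i k‖ ^ 2) := by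
  simpa only [Fintype.sum_prod_type, Finset.mul_sum] using
    norm_sq_sum_weighted_mul_le (fun p : ι × κ => lam p.1) (fun p => hlam p.1)
      (fun p => a p.1 p.2) (fun p => b p.1 p.2)

lemma sum_weighted_mul_weighted_eq_sq {ι J : Type*} [Fintype ι] [Fintype J] (lam : ι → ℝ)
    (A B : ι → J → ℝ) (h : ∀ i i', ∑ j, A i j * B i' j = 1) :
    ∑ j, (∑ i, lam i * A i j) * (∑ i, lam i * B i j) = (∑ i, lam i) ^ 2 := by
  calc ∑ j, (∑ i, lam i * A i j) * (∑ i, lam i * B i j)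
      = ∑ j, ∑ i, ∑ i', lam i * lam i' * (A i j * B i' j) := by
        simp_rw [Finset.sum_mul_sum]
        exact Finset.sum_congr rfl fun _ _ => Finset.sum_congr rfl fun _ _ =>
          Finset.sum_congr rfl fun _ _ => by ring
    _ = ∑ i, ∑ i', lam i * lam i' * ∑ j, A i j * B i' j := by
        rw [Finset.sum_comm]
        simp only [Finset.mul_sum]
        exact Finset.sum_congr rfl fun _ _ => Finset.sum_comm
    _ = (∑ i, lam i) ^ 2 := by simp only [h, mul_one, sq, Finset.sum_mul_sum]

lemma norm_sq_sum_weighted_overlap_le {ι κ m n : Type*} [Fintype ι] [Fintype κ] [DecidableEq κ]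
    [Fintype m] [Fintype n] (lam : ι → ℝ) (hlam : ∀ i, 0 ≤ lam i) (e : ι → κ → m → ℂ)
    (f : ι → κ → n → ℂ) (he : ∀ i k k', star (e i k) ⬝ᵥ e i k' = if k = k' then 1 else 0)
    (hf : ∀ i k k', star (f i k) ⬝ᵥ f i k' = if k = k' then 1 else 0) (u : ι → m → ℂ)
    (w : ι → n → ℂ) :
    ‖∑ i, (lam i : ℂ) * ∑ k, (star (e i k) ⬝ᵥ u i) * (star (f i k) ⬝ᵥ w i)‖ ^ 2 ≤
      (∑ i, lam i * ∑ r, ‖u i r‖ ^ 2) * (∑ i, lam i * ∑ r, ‖w i r‖ ^ 2) := by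
  refine (norm_sq_sum_weighted_sum_mul_le lam hlam _ _).trans ?_
  refine mul_le_mul ?_ ?_ (Finset.sum_nonneg fun i _ => by have := hlam i; positivity)
    (Finset.sum_nonneg fun i _ => by have := hlam i; positivity)
  · exact Finset.sum_le_sum fun i _ =>
      mul_le_mul_of_nonneg_left (sum_norm_sq_star_dotProduct_le (e i) (he i) (u i)) (hlam i)
  · exact Finset.sum_le_sum fun i _ =>
      mul_le_mul_of_nonneg_left (sum_norm_sq_star_dotProduct_le (f i) (hf i) (w i)) (hlam i)

theorem switch_bound_to_product_general
    (N1 N2 M J : ℕ)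
    -- the maximally entangled states x_i = (1/√N₂) ∑_k e_{ik} ⊗ f_{ik}
    (e : Fin M → Fin N2 → Fin N1 → ℂ) (f : Fin M → Fin N2 → Fin N2 → ℂ)
    (he : ∀ i k k', ∑ a : Fin N1, (starRingEnd ℂ) (e i k a) * e i k' a =
      if k = k' then 1 else 0)
    (hf : ∀ i k k', ∑ a : Fin N2, (starRingEnd ℂ) (f i k a) * f i k' a =
      if k = k' then 1 else 0)
    (x : Fin M → Fin N1 × Fin N2 → ℂ)
    (hx : ∀ i p, x i p = (1 / Real.sqrt N2 : ℂ) * ∑ k : Fin N2, e i k p.1 * f i k p.2)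
    -- the product unit vectors y_i = v_i ⊗ w_i
    (v : Fin M → Fin N1 → ℂ) (w : Fin M → Fin N2 → ℂ)
    (hv : ∀ i, ∑ a : Fin N1, (starRingEnd ℂ) (v i a) * v i a = 1)
    (hw : ∀ i, ∑ a : Fin N2, (starRingEnd ℂ) (w i a) * w i a = 1)
    -- the weights
    (lam : Fin M → ℝ) (hlam : ∀ i, 0 ≤ lam i) (hsum : ∑ i, lam i = 1)
    -- the product Kraus operators K_j = K_{j1} ⊗ K_{j2} with ∑_j K_j† K_j = 𝟙
    (K1 : Fin J → Matrix (Fin N1) (Fin N1) ℂ)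
    (K2 : Fin J → Matrix (Fin N2) (Fin N2) ℂ)
    (hK : ∀ p q : Fin N1 × Fin N2,
      ∑ j : Fin J, ∑ r : Fin N1 × Fin N2,
        (starRingEnd ℂ) (K1 j r.1 p.1 * K2 j r.2 p.2) * (K1 j r.1 q.1 * K2 j r.2 q.2) =
      if p = q then 1 else 0) :
    ∑ j : Fin J,
        ‖∑ i : Fin M, (lam i : ℂ) *
            ∑ p : Fin N1 × Fin N2, ∑ q : Fin N1 × Fin N2,
              (starRingEnd ℂ) (x i p) * (K1 j p.1 q.1 * K2 j p.2 q.2) *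
                (v i q.1 * w i q.2)‖ ^ 2 ≤
      1 / N2 := by
  set c : ℂ := 1 / Real.sqrt N2
  have hKraus : ∑ j, (K1 j ⊗ₖ K2 j)ᴴ * (K1 j ⊗ₖ K2 j) = 1 := by
    ext p q
    simpa [Matrix.sum_apply, mul_apply, one_apply] using hK p q
  have hnorm_c : ‖c‖ ^ 2 = 1 / N2 := by simp [c]
  have hamp : ∀ i j, ∑ p : Fin N1 × Fin N2, ∑ q : Fin N1 × Fin N2,
      (starRingEnd ℂ) (x i p) * (K1 j p.1 q.1 * K2 j p.2 q.2) * (v i q.1 * w i q.2) =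
        star c * ∑ k, (star (e i k) ⬝ᵥ (K1 j *ᵥ v i)) * (star (f i k) ⬝ᵥ (K2 j *ᵥ w i)) := by
    intro i j
    rw [← star_dotProduct_tensorVec_of_eq_mul_sum (hx i), ← kronecker_mulVec_tensorVec]
    simp [dotProduct, mulVec, Finset.mul_sum, mul_assoc]
  have hunit : ∀ i i',
      ∑ j, (∑ r, ‖(K1 j *ᵥ v i) r‖ ^ 2) * (∑ r, ‖(K2 j *ᵥ w i') r‖ ^ 2) = 1 := by
    intro i i'
    have hv' : ∑ r, ‖v i r‖ ^ 2 = 1 := by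
      exact_mod_cast (star_dotProduct_self_eq_sum_norm_sq _).symm.trans (hv i)
    have hw' : ∑ r, ‖w i' r‖ ^ 2 = 1 := by
      exact_mod_cast (star_dotProduct_self_eq_sum_norm_sq _).symm.trans (hw i')
    rw [sum_kronecker_norm_sq_eq K1 K2 hKraus, hv', hw', one_mul]
  calc _ = ∑ j, ‖c‖ ^ 2 * ‖∑ i, (lam i : ℂ) * ∑ k, (star (e i k) ⬝ᵥ (K1 j *ᵥ v i)) *
        (star (f i k) ⬝ᵥ (K2 j *ᵥ w i))‖ ^ 2 := by
        simp only [hamp, mul_left_comm _ (star c), ← Finset.mul_sum, norm_mul, norm_star, mul_pow]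
    _ ≤ ∑ j, ‖c‖ ^ 2 * ((∑ i, lam i * ∑ r, ‖(K1 j *ᵥ v i) r‖ ^ 2) *
        (∑ i, lam i * ∑ r, ‖(K2 j *ᵥ w i) r‖ ^ 2)) := by
        gcongr with j
        exact norm_sq_sum_weighted_overlap_le lam hlam e f he hf _ _
    _ = 1 / N2 := by
        rw [← Finset.mul_sum, sum_weighted_mul_weighted_eq_sq lam _ _ hunit, hsum, hnorm_c]
        ring

theorem switch_bound_to_product
    (N1 N2 M J : ℕ) (hN2 : 0 < N2) (hN : N2 ≤ N1)
    -- the maximally entangled states x_i = (1/√N₂) ∑_k e_{ik} ⊗ f_{ik}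
    (e : Fin M → Fin N2 → Fin N1 → ℂ) (f : Fin M → Fin N2 → Fin N2 → ℂ)
    (he : ∀ i k k', ∑ a : Fin N1, (starRingEnd ℂ) (e i k a) * e i k' a =
      if k = k' then 1 else 0)
    (hf : ∀ i k k', ∑ a : Fin N2, (starRingEnd ℂ) (f i k a) * f i k' a =
      if k = k' then 1 else 0)
    (x : Fin M → Fin N1 × Fin N2 → ℂ)
    (hx : ∀ i p, x i p = (1 / Real.sqrt N2 : ℂ) * ∑ k : Fin N2, e i k p.1 * f i k p.2)
    -- the product unit vectors y_i = v_i ⊗ w_i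
    (v : Fin M → Fin N1 → ℂ) (w : Fin M → Fin N2 → ℂ)
    (hv : ∀ i, ∑ a : Fin N1, (starRingEnd ℂ) (v i a) * v i a = 1)
    (hw : ∀ i, ∑ a : Fin N2, (starRingEnd ℂ) (w i a) * w i a = 1)
    -- the weights
    (lam : Fin M → ℝ) (hlam : ∀ i, 0 ≤ lam i) (hsum : ∑ i, lam i = 1)
    -- the product Kraus operators K_j = K_{j1} ⊗ K_{j2} with ∑_j K_j† K_j = 𝟙
    (K1 : Fin J → Matrix (Fin N1) (Fin N1) ℂ)
    (K2 : Fin J → Matrix (Fin N2) (Fin N2) ℂ)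
    (hK : ∀ p q : Fin N1 × Fin N2,
      ∑ j : Fin J, ∑ r : Fin N1 × Fin N2,
        (starRingEnd ℂ) (K1 j r.1 p.1 * K2 j r.2 p.2) * (K1 j r.1 q.1 * K2 j r.2 q.2) =
      if p = q then 1 else 0) :
    ∑ j : Fin J,
        ‖∑ i : Fin M, (lam i : ℂ) *
            ∑ p : Fin N1 × Fin N2, ∑ q : Fin N1 × Fin N2,
              (starRingEnd ℂ) (x i p) * (K1 j p.1 q.1 * K2 j p.2 q.2) *
                (v i q.1 * w i q.2)‖ ^ 2 ≤
      1 / N2 :=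
  switch_bound_to_product_general N1 N2 M J e f he hf x hx v w hv hw lam hlam hsum K1 K2 hK
end
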